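/- If G is a connected graph that is W₂ and not complete, then every vertex of G has degree at least 2. -/

import Mathlib

open SimpleGraph

/-- The circulant graph `C_n(S)` on `ℤ/nℤ`: vertices `i, j` are adjacent iff
`min{|i−j|, n−|i−j|} ∈ S`, i.e. iff `i − j` or `j − i` is congruent mod `n`
to an element of `S ⊆ {1, …, ⌊n/2⌋}`. -/
def circ (n : ℕ) (S : Set ℕ) : SimpleGraph (ZMod n) :=
  SimpleGraph.circulantGraph ((fun s : ℕ => (s : ZMod n)) '' S)

/-- `s` is an independent set of `G`. -/
def IsIndep {V : Type*} (G : SimpleGraph V) (s : Finset V) : Prop :=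
  ∀ ⦃u⦄, u ∈ s → ∀ ⦃w⦄, w ∈ s → ¬ G.Adj u w

/-- The independence number `α(G)`. -/
noncomputable def indepNum {V : Type*} [Fintype V] (G : SimpleGraph V) : ℕ :=
  sSup {k | ∃ s : Finset V, IsIndep G s ∧ s.card = k}

/-- `G` is a W₂ graph: it has at least two vertices and every pair of disjoint
independent sets is contained in a pair of disjoint maximum independent sets. -/
def IsW2 {V : Type*} [Fintype V] (G : SimpleGraph V) : Prop :=
  2 ≤ Fintype.card V ∧
  ∀ A B : Finset V, IsIndep G A → IsIndep G B → Disjoint A B →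
    ∃ A' B' : Finset V, A ⊆ A' ∧ B ⊆ B' ∧ Disjoint A' B' ∧
      IsIndep G A' ∧ IsIndep G B' ∧ A'.card = _root_.indepNum G ∧ B'.card = _root_.indepNum G

/-- The disjoint union of `d` copies of the graph `G`. -/
def copies {V : Type*} (d : ℕ) (G : SimpleGraph V) : SimpleGraph (Fin d × V) where
  Adj p q := p.1 = q.1 ∧ G.Adj p.2 q.2
  symm := ⟨fun p q h => ⟨h.1.symm, h.2.symm⟩⟩
  loopless := ⟨fun p h => G.loopless.irrefl _ h.2⟩

/-!
In a W₂ graph no vertex `v` has `N(v) ⊆ N(w)` for a vertex `w ≠ v`: extend the disjoint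
independent sets `{w}`, `{v}` to disjoint maximum independent sets `A ∋ w`, `B ∋ v`; then `A`
misses `v` and `N(w) ⊇ N(v)`, so `A ∪ {v}` is a larger independent set. If `v` were a leaf with
neighbour `u`, any other neighbour `w` of `u` would give `N(v) = {u} ⊆ N(w)`; so `uv` is an
isolated edge, and connectivity forces `G = K₂`.
-/

open Finset

section

variable {V : Type*} {G : SimpleGraph V}

lemma isIndep_singleton (v : V) : IsIndep G {v} := by
  intro a ha b hb
  rw [mem_singleton] at ha hb
  subst ha hb
  exact G.irrefl

lemma IsIndep.insert [DecidableEq V] {s : Finset V} {v : V} (hs : IsIndep G s)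
    (hv : ∀ x ∈ s, ¬G.Adj v x) : IsIndep G (insert v s) := by
  intro a ha b hb
  rw [mem_insert] at ha hb
  rcases ha with rfl | ha <;> rcases hb with rfl | hb
  exacts [G.irrefl, hv _ hb, fun h => hv _ ha h.symm, hs ha hb]

lemma IsIndep.card_le_indepNum [Fintype V] {s : Finset V} (hs : IsIndep G s) :
    s.card ≤ _root_.indepNum G :=
  le_csSup ⟨Fintype.card V, fun _ ⟨t, _, ht⟩ => ht ▸ t.card_le_univ⟩ ⟨s, hs, rfl⟩

lemma IsW2.not_neighborSet_subset [Fintype V] (hW2 : IsW2 G) {v w : V} (hne : v ≠ w) :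
    ¬G.neighborSet v ⊆ G.neighborSet w := by
  classical
  intro hsub
  obtain ⟨A, B, hsubA, hsubB, hAB, hA, -, hcardA, -⟩ := hW2.2 {w} {v} (isIndep_singleton w)
    (isIndep_singleton v) (disjoint_singleton.mpr hne.symm)
  have hwA : w ∈ A := hsubA (mem_singleton_self w)
  have hvA : v ∉ A := disjoint_right.mp hAB (hsubB (mem_singleton_self v))
  have hins : IsIndep G (insert v A) := hA.insert fun x hx hvx =>
    hA hx hwA (hsub hvx).symm
  have hcard := hins.card_le_indepNum
  rw [card_insert_of_notMem hvA, hcardA] at hcard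
  omega

lemma SimpleGraph.Connected.eq_top_of_adj_of_unique_adj (hconn : G.Connected) {u v : V}
    (huv : G.Adj u v) (hu : ∀ w, G.Adj u w → w = v) (hv : ∀ w, G.Adj v w → w = u) :
    G = ⊤ := by
  have hall : ∀ x, x = u ∨ x = v := fun x => by
    induction (reachable_iff_reflTransGen u x).mp (hconn u x) with
    | refl => exact .inl rfl
    | tail _ hab ih => rcases ih with rfl | rfl; exacts [.inr (hu _ hab), .inl (hv _ hab)]
  ext x y
  refine ⟨G.ne_of_adj, fun hxy => ?_⟩
  rcases hall x with rfl | rfl <;> rcases hall y with rfl | rfl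
  exacts [absurd rfl hxy, huv, huv.symm, absurd rfl hxy]

end

theorem stmt_17 {V : Type*} [Fintype V] (G : SimpleGraph V)
    [DecidableRel G.Adj] (hconn : G.Connected) (hW2 : IsW2 G)
    (hnc : G ≠ ⊤) : ∀ v : V, 2 ≤ G.degree v := by
  intro v
  have : Nontrivial V := Fintype.one_lt_card_iff_nontrivial.mp hW2.1
  have hpos := hconn.preconnected.degree_pos_of_nontrivial v
  by_contra! hlt
  obtain ⟨u, hvu, hv⟩ := degree_eq_one_iff_existsUnique_adj.mp (by omega : G.degree v = 1)
  have hu : ∀ w, G.Adj u w → w = v := by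
    intro w huw
    by_contra hwv
    refine hW2.not_neighborSet_subset (Ne.symm hwv) fun x hx => ?_
    rw [mem_neighborSet, hv x hx]
    exact huw.symm
  exact hnc (hconn.eq_top_of_adj_of_unique_adj hvu.symm hu hv)
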